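/- Let m, n be coprime positive integers with √3 < m/n ≤ 3. Then the lattice Ω with basis matrix [[m, m], [n√3, −n√3]] is a sublattice of the hexagonal lattice Λ_h = [[1, −1/2], [0, √3/2]]ℤ², its index in Λ_h equals 4mn, its determinant equals 2mn√3, and its minimum (squared minimal norm) equals m² + 3n². -/
import Mathlib


/-- The set of points of the lattice spanned by the columns of a 2×2 matrix. -/
def latticeOf (A : Matrix (Fin 2) (Fin 2) ℝ) : Set (Fin 2 → ℝ) :=
  {v | ∃ s t : ℤ, v = A.mulVec ![(s : ℝ), (t : ℝ)]}

/-- Basis matrix of the hexagonal lattice. -/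
noncomputable def hexBasis : Matrix (Fin 2) (Fin 2) ℝ :=
  !![1, -(1/2); 0, Real.sqrt 3 / 2]

set_option maxHeartbeats 1600000 in
theorem stmt_9 (m n : ℤ) (hm : 0 < m) (hn : 0 < n) (hmn : Int.gcd m n = 1)
    (h1 : Real.sqrt 3 * n < m) (h2 : (m : ℝ) ≤ 3 * n)
    (B : Matrix (Fin 2) (Fin 2) ℝ)
    (hB : B = !![(m : ℝ), (m : ℝ); (n : ℝ) * Real.sqrt 3, -((n : ℝ) * Real.sqrt 3)]) :
    latticeOf B ⊆ latticeOf hexBasis ∧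
    |B.det| = 2 * m * n * Real.sqrt 3 ∧
    |B.det| / |hexBasis.det| = 4 * m * n ∧
    IsLeast {x : ℝ | ∃ v ∈ latticeOf B, v ≠ 0 ∧ x = v 0 ^ 2 + v 1 ^ 2}
      ((m : ℝ) ^ 2 + 3 * n ^ 2) := by
  have s3 : Real.sqrt 3 ^ 2 = 3 := Real.sq_sqrt (by norm_num)
  have s3pos : (0:ℝ) < Real.sqrt 3 := Real.sqrt_pos.2 (by norm_num)
  have hmR : (0:ℝ) < m := by exact_mod_cast hm
  have hnR : (0:ℝ) < n := by exact_mod_cast hn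
  have one_le_sq : ∀ k : ℤ, (k:ℝ) ≠ 0 → (1:ℝ) ≤ (k:ℝ)^2 := by
    intro k hk
    have hk' : k ≠ 0 := by exact_mod_cast hk
    have : (1:ℤ) ≤ k^2 := by nlinarith [Int.one_le_abs hk', sq_abs k, abs_nonneg k]
    exact_mod_cast this
  have hBv : ∀ s t : ℤ, B.mulVec ![(s:ℝ), (t:ℝ)] =
      ![(m:ℝ)*s + m*t, n*Real.sqrt 3*s - n*Real.sqrt 3*t] := by
    intro s t
    subst hB
    funext i
    fin_cases i <;>
      simp [Matrix.mulVec, dotProduct, Fin.sum_univ_two] <;> ring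
  have hHv : ∀ s t : ℤ, hexBasis.mulVec ![(s:ℝ), (t:ℝ)] =
      ![(s:ℝ) - t/2, Real.sqrt 3 / 2 * t] := by
    intro s t
    funext i
    fin_cases i <;>
      simp [hexBasis, Matrix.mulVec, dotProduct, Fin.sum_univ_two] <;> ring
  have hdetneg : (m:ℝ) * -((n:ℝ) * Real.sqrt 3) - m * (n * Real.sqrt 3) ≤ 0 := by
    nlinarith [mul_pos (mul_pos hmR hnR) s3pos]
  refine ⟨?_, ?_, ?_, ?_, ?_⟩
  · rintro v ⟨s, t, rfl⟩
    refine ⟨m*(s+t) + n*(s-t), 2*n*(s-t), ?_⟩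
    rw [hBv, hHv]
    funext i
    fin_cases i <;> simp <;> push_cast <;> ring
  · subst hB
    rw [Matrix.det_fin_two_of]
    rw [abs_of_nonpos hdetneg]
    ring
  · subst hB
    rw [Matrix.det_fin_two_of]
    rw [abs_of_nonpos hdetneg]
    have : hexBasis.det = Real.sqrt 3 / 2 := by
      simp [hexBasis, Matrix.det_fin_two_of]
    rw [this, abs_of_pos (by positivity)]
    field_simp
    ring
  · -- membership
    refine ⟨B.mulVec ![(1:ℤ), ((0:ℤ):ℝ)], ⟨1, 0, rfl⟩, ?_, ?_⟩
    · rw [hBv]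
      intro h
      have := congrFun h 0
      simp at this
      linarith
    · rw [hBv]
      simp
      nlinarith
  · -- lower bound
    rintro x ⟨v, ⟨s, t, rfl⟩, hv0, rfl⟩
    rw [hBv] at hv0 ⊢
    simp only [Matrix.cons_val_zero, Matrix.cons_val_one, Matrix.head_cons]
    have e1 : ((m:ℝ)*s + m*t)^2 = m^2*((s:ℝ)+t)^2 := by ring
    have e2 : ((n:ℝ)*Real.sqrt 3*s - n*Real.sqrt 3*t)^2 = 3*(n:ℝ)^2*((s:ℝ)-t)^2 := by
      have : ((n:ℝ)*Real.sqrt 3*s - n*Real.sqrt 3*t)^2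
          = Real.sqrt 3 ^2 * ((n:ℝ)^2*((s:ℝ)-t)^2) := by ring
      rw [this, s3]; ring
    rw [e1, e2]
    have key : (s:ℝ) + t ≠ 0 ∨ (s:ℝ) - t ≠ 0 := by
      by_contra h
      push_neg at h
      apply hv0
      funext i
      fin_cases i <;> simp <;> nlinarith [h.1, h.2]
    have h31 : (1:ℝ) < Real.sqrt 3 := by nlinarith
    have hm13 : (n:ℝ) < m := by nlinarith
    have h2' : (m:ℝ)^2 ≤ 9 * n^2 := by nlinarith
    rcases eq_or_ne ((s:ℝ) + t) 0 with hst | hst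
    · have hst' : (s:ℝ) - t ≠ 0 := by tauto
      have h2s : (s:ℝ) - t = 2*s := by linarith [hst]
      have hsz : (s:ℝ) ≠ 0 := by
        intro h; apply hst'; rw [h2s, h]; ring
      have hs1 := one_le_sq s hsz
      have h4 : ((s:ℝ) - t)^2 ≥ 4 := by rw [h2s]; nlinarith
      nlinarith [sq_nonneg ((s:ℝ)+t), sq_nonneg (n:ℝ), sq_nonneg (m:ℝ),
        mul_le_mul_of_nonneg_left h4 (sq_nonneg (n:ℝ))]
    · rcases eq_or_ne ((s:ℝ) - t) 0 with hts | hts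
      · have h2s : (s:ℝ) + t = 2*s := by linarith [hts]
        have hsz : (s:ℝ) ≠ 0 := by
          intro h; apply hst; rw [h2s, h]; ring
        have hs1 := one_le_sq s hsz
        have h4 : ((s:ℝ) + t)^2 ≥ 4 := by rw [h2s]; nlinarith
        nlinarith [sq_nonneg ((s:ℝ)-t), sq_nonneg (n:ℝ), sq_nonneg (m:ℝ),
          mul_le_mul_of_nonneg_left h4 (sq_nonneg (m:ℝ))]
      · have hi1 : (1:ℝ) ≤ ((s:ℝ)+t)^2 := by
          have := one_le_sq (s+t) (by push_cast; exact hst)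
          push_cast at this; linarith
        have hi2 : (1:ℝ) ≤ ((s:ℝ)-t)^2 := by
          have := one_le_sq (s-t) (by push_cast; exact hts)
          push_cast at this; linarith
        nlinarith [mul_le_mul_of_nonneg_left hi1 (sq_nonneg (m:ℝ)),
          mul_le_mul_of_nonneg_left hi2 (sq_nonneg (n:ℝ))]
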